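/- For d = 3 and m ≥ 0: χ(v_m) = q_0^{3m(m+1)/2} q_1^{m+1} and χ(w_m) = q_0^{3m(m+1)/2 + 1} q_1^m q_2, where q_k := χ(γ_k). -/

import Mathlib

open scoped TensorProduct

noncomputable section

/-- standard basis vector `α_i` of `ℚ^n` -/
def alphaV (n : ℕ) (i : Fin n) : Fin n → ℚ := Pi.single i 1

/-- the reflection `σ_ℓ`: `α_ℓ ↦ -α_ℓ`, `α_j ↦ α_j + m α_ℓ`, `α_k ↦ α_k` otherwise -/
def sigmaR (n : ℕ) (ℓ j : Fin n) (m : ℕ) : (Fin n → ℚ) →ₗ[ℚ] (Fin n → ℚ) :=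
  (Pi.basisFun ℚ (Fin n)).constr ℚ (fun k =>
    if k = ℓ then -(alphaV n ℓ)
    else if k = j then alphaV n j + (m : ℚ) • alphaV n ℓ
    else alphaV n k)

/-- the d-th tensor power `σ_ℓ^{⊗d}` -/
def sigmaT (n d : ℕ) (ℓ j : Fin n) (m : ℕ) :
    (⨂[ℚ] _ : Fin d, (Fin n → ℚ)) →ₗ[ℚ] (⨂[ℚ] _ : Fin d, (Fin n → ℚ)) :=
  PiTensorProduct.map (fun _ => sigmaR n ℓ j m)

/-- `u_m = ((m+1)α_ℓ + α_j)^{⊗d} - (m α_ℓ + α_j)^{⊗d}` -/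
def uT (n d : ℕ) (ℓ j : Fin n) (m : ℕ) : ⨂[ℚ] _ : Fin d, (Fin n → ℚ) :=
  (PiTensorProduct.tprod ℚ fun _ : Fin d => ((m : ℚ) + 1) • alphaV n ℓ + alphaV n j)
    - (PiTensorProduct.tprod ℚ fun _ : Fin d => (m : ℚ) • alphaV n ℓ + alphaV n j)

/-- `v_m = (σ_ℓ^{⊗d}(u_m) + u_m)/2` -/
def vT (n d : ℕ) (ℓ j : Fin n) (m : ℕ) : ⨂[ℚ] _ : Fin d, (Fin n → ℚ) :=
  (1 / 2 : ℚ) • (sigmaT n d ℓ j m (uT n d ℓ j m) + uT n d ℓ j m)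

/-- `w_m = u_m - v_m` -/
def wT (n d : ℕ) (ℓ j : Fin n) (m : ℕ) : ⨂[ℚ] _ : Fin d, (Fin n → ℚ) :=
  uT n d ℓ j m - vT n d ℓ j m

/-- `γ_ν`: the sum of all basis tensors `α_{i_1}⊗…⊗α_{i_d}` with entries in `{ℓ,j}`
having exactly `ν` factors equal to `α_j`. -/
def gammaT (n d : ℕ) (ℓ j : Fin n) (ν : ℕ) : ⨂[ℚ] _ : Fin d, (Fin n → ℚ) :=
  ∑ t ∈ Finset.univ.filter
      (fun t : Fin d → Bool => (Finset.univ.filter (fun i => t i = true)).card = ν),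
    PiTensorProduct.tprod ℚ (fun i : Fin d => if t i then alphaV n j else alphaV n ℓ)

/-- `e_{m,k} = ∑_{ν=0, ν≡k (2)}^{k-2} C(k,ν) m^ν` -/
def eP (m k : ℕ) : ℤ :=
  ∑ ν ∈ Finset.range (k - 1), if ν % 2 = k % 2 then (Nat.choose k ν : ℤ) * (m : ℤ) ^ ν else 0

/-- `f_{m,k} = ∑_{ν=0, ν≡k+1 (2)}^{k-1} C(k,ν) m^ν` -/
def fP (m k : ℕ) : ℤ :=
  ∑ ν ∈ Finset.range k, if ν % 2 ≠ k % 2 then (Nat.choose k ν : ℤ) * (m : ℤ) ^ ν else 0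

/-!
Since `σ_ℓ(c α_ℓ + α_j) = (m - c) α_ℓ + α_j`, both `u_m` and `σ_ℓ^{⊗3}(u_m)` are differences of
pure tensor cubes, and expanding `(c α_ℓ + α_j)^{⊗3} = ∑_k c^{3-k} γ_k` writes `v_m` and `w_m` as
combinations of `γ_0, γ_1, γ_2` with natural coefficients, which the homomorphism `χ` turns into
the claimed products of powers of the `q_k`.
-/

open PiTensorProduct Finset

variable {n : ℕ} {ℓ j : Fin n}

lemma sigmaR_alphaV (m : ℕ) (k : Fin n) :
    sigmaR n ℓ j m (alphaV n k) =
      if k = ℓ then -(alphaV n ℓ) else if k = j then alphaV n j + (m : ℚ) • alphaV n ℓ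
      else alphaV n k := by
  rw [sigmaR, show alphaV n k = Pi.basisFun ℚ (Fin n) k from (Pi.basisFun_apply ℚ _ k).symm,
    Module.Basis.constr_basis, Pi.basisFun_apply]
  rfl

lemma sigmaR_smul_alphaV_add_alphaV (hlj : ℓ ≠ j) (m : ℕ) (c : ℚ) :
    sigmaR n ℓ j m (c • alphaV n ℓ + alphaV n j) = ((m : ℚ) - c) • alphaV n ℓ + alphaV n j := by
  rw [map_add, map_smul, sigmaR_alphaV, sigmaR_alphaV, if_pos rfl, if_neg hlj.symm, if_pos rfl]
  module

lemma sigmaT_tprod_smul_alphaV_add_alphaV (d : ℕ) (hlj : ℓ ≠ j) (m : ℕ) (c : ℚ) :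
    sigmaT n d ℓ j m (tprod ℚ fun _ => c • alphaV n ℓ + alphaV n j) =
      tprod ℚ fun _ => ((m : ℚ) - c) • alphaV n ℓ + alphaV n j := by
  simp only [sigmaT, map_tprod, sigmaR_smul_alphaV_add_alphaV hlj]

lemma tprod_smul_alphaV_add_alphaV {d : ℕ} (c : ℚ) :
    (tprod ℚ fun _ : Fin d => c • alphaV n ℓ + alphaV n j) =
      ∑ ν ∈ range (d + 1), c ^ (d - ν) • gammaT n d ℓ j ν := by
  let e : Bool → Fin n → ℚ := fun s => if s then alphaV n j else alphaV n ℓ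
  let a : Bool → ℚ := fun s => if s then 1 else c
  let count : (Fin d → Bool) → ℕ := fun t => #{i | t i = true}
  have h_split : (fun _ : Fin d => c • alphaV n ℓ + alphaV n j) = fun _ => ∑ s, a s • e s := by
    simp [a, e, add_comm]
  have h_term (t : Fin d → Bool) :
      (tprod ℚ fun i => a (t i) • e (t i)) = c ^ (d - count t) • tprod ℚ fun i => e (t i) := by
    rw [MultilinearMap.map_smul_univ, prod_ite, prod_const_one, one_mul, prod_const]
    have := card_filter_add_card_filter_not (s := univ) (fun i => t i = true)
    simp only [Bool.not_eq_true, card_univ, Fintype.card_fin] at this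
    congr 2
    simp only [Bool.not_eq_true, count]
    omega
  have h_count (t : Fin d → Bool) : count t ∈ range (d + 1) :=
    mem_range_succ_iff.2 ((card_filter_le _ _).trans (card_fin d).le)
  rw [h_split, MultilinearMap.map_sum]
  simp only [h_term]
  rw [← sum_fiberwise_of_maps_to (fun t _ => h_count t)]
  refine sum_congr rfl fun ν _ => ?_
  rw [gammaT, smul_sum]
  exact sum_congr rfl fun t ht => by rw [show count t = ν from (mem_filter.1 ht).2]

lemma tprod_three_smul_alphaV_add_alphaV (c : ℚ) :
    (tprod ℚ fun _ : Fin 3 => c • alphaV n ℓ + alphaV n j) =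
      c ^ 3 • gammaT n 3 ℓ j 0 + c ^ 2 • gammaT n 3 ℓ j 1 + c • gammaT n 3 ℓ j 2
        + gammaT n 3 ℓ j 3 := by
  simp [tprod_smul_alphaV_add_alphaV, sum_range_succ]

lemma uT_three_eq (m : ℕ) :
    uT n 3 ℓ j m = (3 * (m : ℚ) ^ 2 + 3 * m + 1) • gammaT n 3 ℓ j 0
      + (2 * (m : ℚ) + 1) • gammaT n 3 ℓ j 1 + gammaT n 3 ℓ j 2 := by
  rw [uT, tprod_three_smul_alphaV_add_alphaV, tprod_three_smul_alphaV_add_alphaV]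
  module

lemma sigmaT_uT_three_eq (hlj : ℓ ≠ j) (m : ℕ) :
    sigmaT n 3 ℓ j m (uT n 3 ℓ j m) = -gammaT n 3 ℓ j 0 + gammaT n 3 ℓ j 1 - gammaT n 3 ℓ j 2 := by
  rw [uT, map_sub, sigmaT_tprod_smul_alphaV_add_alphaV 3 hlj,
    sigmaT_tprod_smul_alphaV_add_alphaV 3 hlj, tprod_three_smul_alphaV_add_alphaV,
    tprod_three_smul_alphaV_add_alphaV]
  module

lemma cast_mul_add_one_div_two (m : ℕ) : ((m * (m + 1) / 2 : ℕ) : ℚ) = m * (m + 1) / 2 := by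
  rw [Nat.cast_div (Nat.even_mul_succ_self m).two_dvd two_ne_zero]
  push_cast
  ring

lemma vT_three_eq (hlj : ℓ ≠ j) (m : ℕ) :
    vT n 3 ℓ j m = (3 * (m * (m + 1) / 2)) • gammaT n 3 ℓ j 0 + (m + 1) • gammaT n 3 ℓ j 1 := by
  rw [vT, sigmaT_uT_three_eq hlj, uT_three_eq, ← Nat.cast_smul_eq_nsmul ℚ,
    ← Nat.cast_smul_eq_nsmul ℚ]
  push_cast [cast_mul_add_one_div_two]
  module

lemma wT_three_eq (hlj : ℓ ≠ j) (m : ℕ) :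
    wT n 3 ℓ j m = (3 * (m * (m + 1) / 2) + 1) • gammaT n 3 ℓ j 0 + m • gammaT n 3 ℓ j 1
      + gammaT n 3 ℓ j 2 := by
  rw [wT, vT, sigmaT_uT_three_eq hlj, uT_three_eq, ← Nat.cast_smul_eq_nsmul ℚ,
    ← Nat.cast_smul_eq_nsmul ℚ]
  push_cast [cast_mul_add_one_div_two]
  module

/-- d = 3: `χ(v_m) = q_0^{3m(m+1)/2} q_1^{m+1}` and
`χ(w_m) = q_0^{3m(m+1)/2+1} q_1^m q_2`, where `q_k = χ(γ_k)`. -/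
theorem stmt12 {K : Type*} [Field K] (n : ℕ) (ℓ j : Fin n) (hlj : ℓ ≠ j) (m : ℕ)
    (χ : (⨂[ℚ] _ : Fin 3, (Fin n → ℚ)) →+ Additive Kˣ) :
    letI q : ℕ → Kˣ := fun k => Additive.toMul (χ (gammaT n 3 ℓ j k))
    Additive.toMul (χ (vT n 3 ℓ j m)) = q 0 ^ (3 * (m * (m + 1) / 2)) * q 1 ^ (m + 1) ∧
    Additive.toMul (χ (wT n 3 ℓ j m)) = q 0 ^ (3 * (m * (m + 1) / 2) + 1) * q 1 ^ m * q 2 := by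
  simp only [vT_three_eq hlj, wT_three_eq hlj, map_add, map_nsmul, toMul_add, toMul_nsmul,
    and_self]

end
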